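/- Let K be a non-singular cell complex and x, y ∈ K. Define the ∼-dual of a cell x as the disjoint union of its dual in K (maximal cells of K containing x) and its dual in ∂K (maximal cells of ∂K containing x, empty if x ⊄ ∂K). Then the ∼-dual of x is strictly contained in the ∼-dual of y if and only if y ⊊ x. -/

import Mathlib

open scoped Classical

universe u v

/-- Underlying data of a combinatorial cell complex: a finite collection of
finite subsets of a vertex type `V` (the cells) together with a rank function. -/
structure Precc (V : Type u) where
  cells : Finset (Finset V)
  rk : Finset V → ℕ

namespace Precc

variable {V : Type u} [DecidableEq V] [Fintype V]

/-- The axioms of a combinatorial cell complex (cc): cells are nonempty, every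
vertex of a cell is a (rank 0) cell, rank-0 cells are exactly the singletons,
rank is strictly monotone, cells are closed under nonempty intersections, ranks
have no gaps, and the diamond property. -/
def IsCC (K : Precc V) : Prop :=
  (∀ x ∈ K.cells, x.Nonempty) ∧
  (∀ x ∈ K.cells, ∀ a ∈ x, ({a} : Finset V) ∈ K.cells) ∧
  (∀ x ∈ K.cells, (K.rk x = 0 ↔ x.card = 1)) ∧
  (∀ x ∈ K.cells, ∀ y ∈ K.cells, x ⊂ y → K.rk x < K.rk y) ∧
  (∀ x ∈ K.cells, ∀ y ∈ K.cells, x ∩ y = ∅ ∨ x ∩ y ∈ K.cells) ∧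
  (∀ x ∈ K.cells, ∀ y ∈ K.cells, x ⊂ y →
    ∃ z ∈ K.cells, x ⊂ z ∧ z ⊆ y ∧ K.rk z = K.rk x + 1) ∧
  (∀ x ∈ K.cells, ∀ y ∈ K.cells, x ⊆ y → K.rk y = K.rk x + 2 →
    ∃ z₁ ∈ K.cells, ∃ z₂ ∈ K.cells, z₁ ≠ z₂ ∧
      ∀ z ∈ K.cells, ((x ⊆ z ∧ z ⊆ y ∧ K.rk z = K.rk x + 1) ↔ (z = z₁ ∨ z = z₂)))

/-- The set of cofaces of a cell. -/
noncomputable def cface (K : Precc V) (x : Finset V) : Finset (Finset V) :=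
  K.cells.filter fun y => x ⊆ y ∧ K.rk y = K.rk x + 1

/-- The set of faces of a cell. -/
noncomputable def face (K : Precc V) (x : Finset V) : Finset (Finset V) :=
  K.cells.filter fun y => y ⊆ x ∧ K.rk y + 1 = K.rk x

/-- The rank (dimension) of the complex. -/
def Rk (K : Precc V) : ℕ := K.cells.sup K.rk

/-- The set of cells of a given rank. -/
noncomputable def cellsOfRank (K : Precc V) (r : ℕ) : Finset (Finset V) :=
  K.cells.filter fun x => K.rk x = r

/-- The dual set of a set of vertices: the maximal cells containing it. -/
noncomputable def dualSet (K : Precc V) (A : Finset V) : Finset (Finset V) :=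
  (K.cellsOfRank K.Rk).filter fun z => A ⊆ z

/-- A cc is pure if every maximal cell has maximal rank. -/
def Pure (K : Precc V) : Prop :=
  ∀ x ∈ K.cells, (∀ y ∈ K.cells, ¬ x ⊂ y) → K.rk x = K.Rk

/-- A cc is graph-based if every edge (1-cell) has exactly two vertices. -/
def GraphBased (K : Precc V) : Prop :=
  ∀ e ∈ K.cells, K.rk e = 1 → e.card = 2

/-- Non-branching: every sub-maximal cell lies in at most two maximal cells. -/
def NonBranching (K : Precc V) : Prop :=
  ∀ y ∈ K.cells, K.rk y + 1 = K.Rk → (K.dualSet y).card ≤ 2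

def NonSingular (K : Precc V) : Prop :=
  K.GraphBased ∧ K.Pure ∧ K.NonBranching

/-- Closed: non-singular and every sub-maximal cell lies in exactly two
maximal cells. -/
def Closed (K : Precc V) : Prop :=
  K.NonSingular ∧ ∀ y ∈ K.cells, K.rk y + 1 = K.Rk → (K.dualSet y).card = 2

/-- Cells of the boundary: cells contained in a sub-maximal cell lying in
exactly one maximal cell. -/
noncomputable def bdryCells (K : Precc V) : Finset (Finset V) :=
  K.cells.filter fun x =>
    ∃ y ∈ K.cells, x ⊆ y ∧ K.rk y + 1 = K.Rk ∧ (K.dualSet y).card = 1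

/-- The boundary complex. -/
noncomputable def boundary (K : Precc V) : Precc V :=
  ⟨K.bdryCells, K.rk⟩

/-- The dual complex of a (pure) cc, with rank of the dual cell of `x` equal
to `Rk K - rk x` (encoded intrinsically via the intersection of the dual set). -/
noncomputable def dual (K : Precc V) : Precc (Finset V) :=
  ⟨K.cells.image K.dualSet, fun A => K.Rk - K.rk (A.inf id)⟩

/-- The barycentric subdivision: cells are nonempty chains of cells of `K`. -/
noncomputable def bdiv (K : Precc V) : Precc (Finset V) :=
  ⟨K.cells.powerset.filter fun c => c.Nonempty ∧ ∀ x ∈ c, ∀ y ∈ c, x ⊆ y ∨ y ⊆ x,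
   fun c => c.card - 1⟩

/-- Isomorphism of (pre)cell complexes: a rank-preserving bijection between the
cell sets preserving and reflecting inclusions. -/
def IsIso {A : Type u} {B : Type v} (K : Precc A) (L : Precc B) : Prop :=
  ∃ f : Finset A → Finset B,
    Set.BijOn f ↑K.cells ↑L.cells ∧
    (∀ x ∈ K.cells, ∀ y ∈ K.cells, (x ⊆ y ↔ f x ⊆ f y)) ∧
    (∀ x ∈ K.cells, L.rk (f x) = K.rk x)

/-- Adjacency of two vertices via an edge of `K`. -/
def EdgeRel (K : Precc V) (a b : V) : Prop :=
  ({a, b} : Finset V) ∈ K.cells ∧ K.rk ({a, b} : Finset V) = 1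

/-- Connectedness of a cc: graph-based, and the 1-skeleton is connected. -/
def Connected (K : Precc V) : Prop :=
  K.GraphBased ∧ ∀ a b : V, ({a} : Finset V) ∈ K.cells → ({b} : Finset V) ∈ K.cells →
    Relation.ReflTransGen K.EdgeRel a b

/-- Cell-connectedness: the 1-skeleton of every cell is connected. -/
def CellConnected (K : Precc V) : Prop :=
  K.GraphBased ∧ ∀ x ∈ K.cells, ∀ a ∈ x, ∀ b ∈ x,
    Relation.ReflTransGen (fun s t => s ∈ x ∧ t ∈ x ∧ K.EdgeRel s t) a b

/-- A local cc: connected and cell-connected. -/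
def LocalCC (K : Precc V) : Prop := K.Connected ∧ K.CellConnected

/-- The vertex set of a cc. -/
noncomputable def vertices (K : Precc V) : Finset V :=
  Finset.univ.filter fun a => ({a} : Finset V) ∈ K.cells

/-- `J` is a sub-cell complex of `K`. -/
def Subcomplex (J K : Precc V) : Prop :=
  J.cells ⊆ K.cells ∧ ∀ x ∈ J.cells, J.rk x = K.rk x

/-- The edges of `K` containing a given vertex. -/
noncomputable def EdgesAt (K : Precc V) (a : V) : Finset (Finset V) :=
  K.cells.filter fun e => K.rk e = 1 ∧ a ∈ e

/-- The edges of `K` at a vertex `a` that are contained in a cell `x`. -/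
noncomputable def edgesIn (K : Precc V) (a : V) (x : Finset V) : Finset (Finset V) :=
  (K.EdgesAt a).filter fun e => e ⊆ x

/-- `r`-fullness: every set of `j` edges at a vertex (`2 ≤ j ≤ r`) is the set of
edges at that vertex of some `j`-cell. -/
def RFull (K : Precc V) (r : ℕ) : Prop :=
  ∀ a : V, ({a} : Finset V) ∈ K.cells → ∀ j : ℕ, 2 ≤ j → j ≤ r →
    ∀ S ⊆ K.EdgesAt a, S.card = j →
      ∃ x ∈ K.cells, K.rk x = j ∧ K.edgesIn a x = S

/-- Fullness (= 2-fullness). -/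
def Full (K : Precc V) : Prop := K.RFull 2

/-- `n`-regularity: every vertex lies in exactly `n` edges. -/
def Regular (K : Precc V) (n : ℕ) : Prop :=
  ∀ a ∈ K.vertices, (K.EdgesAt a).card = n

/-- `m`-edge-regularity: every edge lies in exactly `m` 2-cells. -/
def EdgeRegular (K : Precc V) (m : ℕ) : Prop :=
  ∀ e ∈ K.cells, K.rk e = 1 → ((K.cellsOfRank 2).filter fun C => e ⊆ C).card = m

/-- Simplicial complex: every nonempty subset of a cell is a cell. -/
def Simplicial (K : Precc V) : Prop :=
  ∀ x ∈ K.cells, ∀ y : Finset V, y ⊆ x → y.Nonempty → y ∈ K.cells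

/-- Adjacency in the dual graph: two distinct maximal cells meeting along an
interior sub-maximal cell. -/
def DualAdj (K : Precc V) (z z' : Finset V) : Prop :=
  z ∈ K.cellsOfRank K.Rk ∧ z' ∈ K.cellsOfRank K.Rk ∧ z ≠ z' ∧
  ∃ y ∈ K.cells, K.rk y + 1 = K.Rk ∧ y ⊆ z ∧ y ⊆ z' ∧ (K.dualSet y).card = 2

/-- A pinch: a cell whose set of containing maximal cells induces a
disconnected subgraph of the dual graph. -/
def IsPinch (K : Precc V) (x : Finset V) : Prop :=
  ¬ ∀ z ∈ K.dualSet x, ∀ z' ∈ K.dualSet x,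
      Relation.ReflTransGen
        (fun a b => a ∈ K.dualSet x ∧ b ∈ K.dualSet x ∧ K.DualAdj a b) z z'

/-- Non-pinching: no `K`-pinch and no `∂K`-pinch. -/
def NonPinching (K : Precc V) : Prop :=
  (∀ x ∈ K.cells, ¬ K.IsPinch x) ∧ (∀ x ∈ K.boundary.cells, ¬ K.boundary.IsPinch x)

/-- The Euler characteristic. -/
noncomputable def chi (K : Precc V) : ℤ :=
  ∑ r ∈ Finset.range (K.Rk + 1), (-1 : ℤ) ^ r * ((K.cellsOfRank r).card : ℤ)

/-- Restriction of `K` to the cells contained in `A`. -/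
noncomputable def restrict (K : Precc V) (A : Finset V) : Precc V :=
  ⟨K.cells.filter fun x => x ⊆ A, K.rk⟩

/-- A shelling of a (non-singular) cc: for rank 0 the trivial order on the one
point, for rank ≥ 1 a linear order of the facets such that the boundary of the
first facet has a shelling and each facet meets the previous ones in a
non-singular complex of rank one less that has a shelling completable into a
shelling of the boundary of the facet, with the boundary conditions of
Definition 4.9 of the paper (see `IsShelling` below).
The intersection of the `k`-th facet with the union of the previous ones,
as a subcomplex of `K`. -/
noncomputable def interComplex (K : Precc V) (L : List (Finset V)) (k : ℕ)
    (hk : k < L.length) : Precc V :=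
  K.restrict (L.get ⟨k, hk⟩ ∩ (L.take k).foldr (· ∪ ·) ∅)

set_option maxHeartbeats 1000000 in
inductive IsShelling : Precc V → List (Finset V) → Prop where
  | point (K : Precc V) (x : Finset V) (hx : K.cells = {x}) (h0 : K.rk x = 0) :
      IsShelling K [x]
  | step (K : Precc V) (L : List (Finset V)) (L₀ : List (Finset V))
      (S S' : ℕ → List (Finset V))
      (hR : 1 ≤ K.Rk) (hnd : L.Nodup) (hne : L ≠ [])
      (henum : L.toFinset = K.cellsOfRank K.Rk)
      (hfirst : IsShelling ((K.restrict L.headI).boundary) L₀)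
      (hS : ∀ (k : ℕ) (hk : k < L.length), 0 < k →
        IsShelling (K.interComplex L k hk) (S k))
      (hS' : ∀ (k : ℕ) (hk : k < L.length), 0 < k →
        IsShelling ((K.restrict (L.get ⟨k, hk⟩)).boundary) (S' k))
      (hpre : ∀ (k : ℕ), k < L.length → 0 < k → S k <+: S' k)
      (hns : ∀ (k : ℕ) (hk : k < L.length), 0 < k →
        (K.interComplex L k hk).NonSingular ∧
        (K.interComplex L k hk).Rk + 1 = K.Rk ∧
        (k < L.length - 1 → (K.interComplex L k hk).bdryCells.Nonempty) ∧
        ((K.interComplex L k hk).bdryCells = ∅ →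
          k = L.length - 1 ∧ K.Closed ∧
          (K.interComplex L k hk).cells = ((K.restrict (L.get ⟨k, hk⟩)).boundary).cells)) :
      IsShelling K L

/-- A shellable cc. -/
def Shellable (K : Precc V) : Prop :=
  K.NonSingular ∧ ∃ L : List (Finset V), IsShelling K L

/-- The connection relation: `∇^a_b e = f`, i.e. `f` is the edge at `b`
associated to the edge `e` at `a` via the unique 2-cell containing `e` and the
edge `{a,b}` (and `{a,b}` is sent to itself). -/
def ConnRel (K : Precc V) (a b : V) (e f : Finset V) : Prop :=
  (e = ({a, b} : Finset V) ∧ f = ({a, b} : Finset V)) ∨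
  (e ≠ ({a, b} : Finset V) ∧ f ≠ ({a, b} : Finset V) ∧
    e ∈ K.cells ∧ f ∈ K.cells ∧ K.rk e = 1 ∧ K.rk f = 1 ∧ a ∈ e ∧ b ∈ f ∧
    ∃ C ∈ K.cells, K.rk C = 2 ∧ e ⊆ C ∧ ({a, b} : Finset V) ⊆ C ∧ f ⊆ C)

/-- `C` is a connected component of a 2-cell of `K`. -/
def IsComponentOfTwoCell (K : Precc V) (C : Finset V) : Prop :=
  ∃ C₀ ∈ K.cells, K.rk C₀ = 2 ∧ C ⊆ C₀ ∧ C.Nonempty ∧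
    (∀ e ∈ K.cells, K.rk e = 1 → e ⊆ C₀ → (e ∩ C).Nonempty → e ⊆ C) ∧
    (∀ a ∈ C, ∀ b ∈ C,
      Relation.ReflTransGen (fun s t => s ∈ C ∧ t ∈ C ∧ K.EdgeRel s t) a b)

/-- `c` is a cyclic enumeration of the vertex set `C` along edges of `K`. -/
def IsCycleOf (K : Precc V) (C : Finset V) (c : List V) : Prop :=
  c ≠ [] ∧ c.Nodup ∧ c.toFinset = C ∧
  ∀ a : V, c.head? = some a → List.Chain' K.EdgeRel (c ++ [a])

/-- A path in the 1-skeleton, recorded by its list of visited vertices. -/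
def IsPathList (K : Precc V) (l : List V) : Prop :=
  l ≠ [] ∧ List.Chain' K.EdgeRel l

/-- Transport of edges along a path via the connection. -/
inductive Transport (K : Precc V) : List V → Finset V → Finset V → Prop where
  | single (a : V) (e : Finset V) : Transport K [a] e e
  | cons {a b : V} {l : List V} {e f g : Finset V} :
      ConnRel K a b e f → Transport K (b :: l) f g → Transport K (a :: b :: l) e g

/-- `p` and `p'` are the two complementary arcs of the boundary cycle of the
2-cell component `C`, with the same endpoints. -/
def ComplementaryArcs (K : Precc V) (C : Finset V) (p p' : List V) : Prop :=
  p ≠ [] ∧ p' ≠ [] ∧ p.head? = p'.head? ∧ p.getLast? = p'.getLast? ∧ p.Nodup ∧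
  ∃ c : List V, IsCycleOf K C c ∧ ∃ a : V, c.head? = some a ∧
    (p ++ p'.reverse.tail = c ++ [a] ∨ p' ++ p.reverse.tail = c ++ [a])

/-- Elementary moves of paths: an edge move (deleting a back-and-forth along an
edge) and a 2-cell move (replacing an arc of a 2-cell component by the
complementary arc). -/
inductive Move (K : Precc V) : List V → List V → Prop where
  | edgeDel (a b : List V) (u w : V) (h : K.EdgeRel u w) :
      Move K (a ++ u :: w :: u :: b) (a ++ u :: b)
  | cellMove (a b p p' : List V) (C : Finset V)
      (hC : K.IsComponentOfTwoCell C) (harc : K.ComplementaryArcs C p p') :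
      Move K (a ++ p ++ b) (a ++ p' ++ b)

/-- Homotopy of paths: generated by finitely many moves (and their inverses). -/
def Homotopic (K : Precc V) (p q : List V) : Prop :=
  Relation.ReflTransGen (fun l l' => Move K l l' ∨ Move K l' l) p q

/-- Monodromy-freedom: the holonomy of the connection around the boundary loop
of any connected component of a 2-cell is the identity on the incident edges. -/
def MonodromyFree (K : Precc V) : Prop :=
  ∀ C : Finset V, K.IsComponentOfTwoCell C → ∀ c : List V, K.IsCycleOf C c →
    ∀ a : V, c.head? = some a →
      ∀ e f : Finset V, e ∈ K.cells → K.rk e = 1 → e ∩ C = {a} →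
        Transport K (c ++ [a]) e f → f = e

/-- Evenness: every connected component of every 2-cell has an even number of
vertices. -/
def EvenCC (K : Precc V) : Prop :=
  ∀ C : Finset V, K.IsComponentOfTwoCell C → Even C.card

/-- The collar of a vertex set `A` in `K`: cells meeting `A` properly. -/
noncomputable def collarCells (K : Precc V) (A : Finset V) : Finset (Finset V) :=
  K.cells.filter fun x => (x ∩ A).Nonempty ∧ ¬ x ⊆ A

/-- The set `E^x_A` of edges of `x` with exactly one vertex in `A`. -/
noncomputable def edgeCollar (K : Precc V) (A : Finset V) (x : Finset V) : Finset (Finset V) :=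
  K.cells.filter fun e => K.rk e = 1 ∧ e ⊆ x ∧ (e ∩ A).card = 1

/-- The `∼`-dual of a cell: the union of its dual in `K` and its dual in `∂K`. -/
noncomputable def bdualSet (K : Precc V) (x : Finset V) : Finset (Finset V) :=
  K.dualSet x ∪ (K.boundary.cells.filter fun y => K.rk y + 1 = K.Rk ∧ x ⊆ y)

/-- `J` is a (possibly empty) union of connected components of `K`. -/
def IsUnionOfComponents (K J : Precc V) : Prop :=
  ∃ W : Finset V, W ⊆ K.vertices ∧
    (∀ a ∈ W, ∀ b : V, Relation.ReflTransGen K.EdgeRel a b → b ∈ W) ∧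
    J.cells = K.cells.filter fun x => x ⊆ W

/-- `g` is the greatest lower bound of `S` among the cells of `K`. -/
def IsMeetOf (K : Precc V) (S : Finset (Finset V)) (g : Finset V) : Prop :=
  g ∈ K.cells ∧ (∀ s ∈ S, g ⊆ s) ∧ ∀ b ∈ K.cells, (∀ s ∈ S, b ⊆ s) → b ⊆ g

/-- `g` is the least upper bound of `S` among the cells of `K`. -/
def IsJoinOf (K : Precc V) (S : Finset (Finset V)) (g : Finset V) : Prop :=
  g ∈ K.cells ∧ (∀ s ∈ S, s ⊆ g) ∧ ∀ b ∈ K.cells, (∀ s ∈ S, s ⊆ b) → g ⊆ b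

/-- A reduction `ρ : J → K` (so that `J` is a subdivision of `K`). -/
def IsReduction (J K : Precc V) (ρ : Finset V → Finset V) : Prop :=
  (∀ x ∈ J.cells, ρ x ∈ K.cells) ∧
  (∀ y ∈ K.cells, ∃ x ∈ J.cells, ρ x = y) ∧
  (∀ x ∈ J.cells, ∀ y ∈ J.cells, x ⊆ y → ρ x ⊆ ρ y) ∧
  (∀ x ∈ J.cells, ∀ y ∈ J.cells, K.rk (ρ x) = 0 → ρ x = ρ y → x = y) ∧
  (∀ x ∈ J.cells, ∀ g : Finset V, IsMeetOf J (J.cface x) g →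
    ∀ h : Finset V, IsMeetOf K ((J.cface x).image ρ) h → ρ g = h) ∧
  (∀ x ∈ J.cells, ∀ y ∈ K.cells, ρ x ⊆ y →
    ∃ w ∈ J.cells, x ⊆ w ∧ J.rk w = K.rk y ∧ ρ w = y) ∧
  (∀ x ∈ J.cells, J.rk x + 1 = K.rk (ρ x) →
    ((J.cface x).filter fun w => ρ w = ρ x).card = 2) ∧
  (∀ x ∈ J.cells, J.rk x = K.rk (ρ x) →
    ∀ y ∈ K.cface (ρ x), ((J.cface x).filter fun w => ρ w = y).card = 1)

/-- A collapse `π : J → K` (so that `J` is an expansion of `K`). -/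
def IsCollapse (J K : Precc V) (π : Finset V → Finset V) : Prop :=
  (∀ x ∈ J.cells, π x ∈ K.cells) ∧
  (∀ y ∈ K.cells, ∃ x ∈ J.cells, π x = y) ∧
  (∀ x ∈ J.cells, ∀ y ∈ J.cells, x ⊆ y → π x ⊆ π y) ∧
  (∀ x ∈ J.cells, ∀ y ∈ J.cells, (∀ z ∈ K.cells, ¬ π x ⊂ z) → π x = π y → x = y) ∧
  (∀ x ∈ J.cells, 1 ≤ J.rk x → IsJoinOf K ((J.face x).image π) (π x)) ∧
  (∀ x ∈ J.cells, ∀ y ∈ K.cells, y ⊆ π x →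
    ∃ w ∈ J.cells, w ⊆ x ∧ J.rk w = K.rk y ∧ π w = y) ∧
  (∀ x ∈ J.cells, K.rk (π x) + 1 = J.rk x →
    ((J.face x).filter fun w => π w = π x).card = 2) ∧
  (∀ x ∈ J.cells, J.rk x = K.rk (π x) →
    ∀ y ∈ K.face (π x), ((J.face x).filter fun w => π w = y).card = 1)

/-- The domain `E_a^{dual b}` of the connection `∇^a_b`: edges at `a` lying in
a common 2-cell with the edge `{a,b}`. -/
noncomputable def connDomain (K : Precc V) (a b : V) : Finset (Finset V) :=
  (K.EdgesAt a).filter fun e =>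
    ∃ C ∈ K.cells, K.rk C = 2 ∧ e ⊆ C ∧ ({a, b} : Finset V) ⊆ C

end Precc

/-!
Every cell `x` of a pure cc is the meet of its `∼`-dual `x̃`, by induction on the codimension of
`x`. A maximal cell lies in its own dual, and a sub-maximal cell lying in only one maximal cell is
its own dual cell in `∂K`. Any other cell has two distinct cofaces, whose intersection is `x`:
its two maximal cells if `x` is sub-maximal, and the two cofaces given by the diamond property
otherwise; by induction each coface is the meet of its `∼`-dual, which is contained in `x̃`.
Consequently `x̃ ⊆ ỹ ↔ y ⊆ x`, and the strict version follows.
-/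

namespace Precc

variable {V : Type u} [DecidableEq V] {K : Precc V}

theorem mem_cface {x z : Finset V} :
    z ∈ K.cface x ↔ z ∈ K.cells ∧ x ⊆ z ∧ K.rk z = K.rk x + 1 :=
  Finset.mem_filter

theorem Pure.exists_superset_rk_eq_Rk (hp : K.Pure) {x : Finset V} (hx : x ∈ K.cells) :
    ∃ w ∈ K.cells, x ⊆ w ∧ K.rk w = K.Rk := by
  obtain ⟨w, hw⟩ := Finset.exists_maximal (s := K.cells.filter (x ⊆ ·))
    ⟨x, Finset.mem_filter.2 ⟨hx, subset_rfl⟩⟩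
  obtain ⟨hwK, hxw⟩ := Finset.mem_filter.1 hw.prop
  refine ⟨w, hwK, hxw, hp w hwK fun t ht hwt => hwt.ne ?_⟩
  exact hw.eq_of_le (Finset.mem_filter.2 ⟨ht, hxw.trans hwt.subset⟩) hwt.le

namespace IsCC

theorem rk_lt_of_ssubset (hK : K.IsCC) {x y : Finset V} (hx : x ∈ K.cells)
    (hy : y ∈ K.cells) (h : x ⊂ y) : K.rk x < K.rk y :=
  hK.2.2.2.1 x hx y hy h

theorem eq_of_subset_of_rk_le (hK : K.IsCC) {x y : Finset V} (hx : x ∈ K.cells)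
    (hy : y ∈ K.cells) (h : x ⊆ y) (hr : K.rk y ≤ K.rk x) : x = y := by
  by_contra hne
  exact (hK.rk_lt_of_ssubset hx hy (h.ssubset_of_ne hne)).not_ge hr

theorem exists_mem_cface_subset_of_ssubset (hK : K.IsCC) {x y : Finset V} (hx : x ∈ K.cells)
    (hy : y ∈ K.cells) (h : x ⊂ y) : ∃ z ∈ K.cface x, z ⊆ y := by
  obtain ⟨z, hz, hxz, hzy, hrz⟩ := hK.2.2.2.2.2.1 x hx y hy h
  exact ⟨z, mem_cface.2 ⟨hz, hxz.subset, hrz⟩, hzy⟩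

theorem inter_eq_of_mem_cface (hK : K.IsCC) {x z₁ z₂ : Finset V} (hx : x ∈ K.cells)
    (h₁ : z₁ ∈ K.cface x) (h₂ : z₂ ∈ K.cface x) (hne : z₁ ≠ z₂) : z₁ ∩ z₂ = x := by
  obtain ⟨hz₁, hxz₁, hr₁⟩ := mem_cface.1 h₁
  obtain ⟨hz₂, hxz₂, hr₂⟩ := mem_cface.1 h₂
  have hx_sub : x ⊆ z₁ ∩ z₂ := Finset.subset_inter hxz₁ hxz₂
  have hmem : z₁ ∩ z₂ ∈ K.cells := (hK.2.2.2.2.1 z₁ hz₁ z₂ hz₂).resolve_left fun h0 =>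
    (hK.1 x hx).ne_empty (Finset.subset_empty.1 (h0 ▸ hx_sub))
  have hssub : z₁ ∩ z₂ ⊂ z₁ := Finset.inter_subset_left.ssubset_of_ne fun h =>
    hne (hK.eq_of_subset_of_rk_le hz₁ hz₂ (h ▸ Finset.inter_subset_right) (by omega))
  have hrk := hK.rk_lt_of_ssubset hmem hz₁ hssub
  exact (hK.eq_of_subset_of_rk_le hx hmem hx_sub (by omega)).symm

theorem one_lt_card_cface (hK : K.IsCC) {x w : Finset V} (hx : x ∈ K.cells) (hw : w ∈ K.cells)
    (hxw : x ⊆ w) (hr : K.rk x + 2 ≤ K.rk w) : 1 < (K.cface x).card := by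
  obtain ⟨z, hz, hzw⟩ := hK.exists_mem_cface_subset_of_ssubset hx hw
    (hxw.ssubset_of_ne (by rintro rfl; omega))
  obtain ⟨hzK, hxz, hrz⟩ := mem_cface.1 hz
  obtain ⟨y, hy, -⟩ := hK.exists_mem_cface_subset_of_ssubset hzK hw
    (hzw.ssubset_of_ne (by rintro rfl; omega))
  obtain ⟨hyK, hzy, hry⟩ := mem_cface.1 hy
  obtain ⟨z₁, hz₁, z₂, hz₂, hne, hdiamond⟩ :=
    hK.2.2.2.2.2.2 x hx y hyK (hxz.trans hzy) (by omega)
  have hcface : ∀ t ∈ K.cells, t = z₁ ∨ t = z₂ → t ∈ K.cface x := fun t ht h =>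
    mem_cface.2 ⟨ht, ((hdiamond t ht).2 h).1, ((hdiamond t ht).2 h).2.2⟩
  exact Finset.one_lt_card.2
    ⟨z₁, hcface z₁ hz₁ (.inl rfl), z₂, hcface z₂ hz₂ (.inr rfl), hne⟩

end IsCC

theorem subset_of_mem_bdualSet {x z : Finset V} (h : z ∈ K.bdualSet x) : x ⊆ z := by
  rcases Finset.mem_union.1 h with h | h
  · exact (Finset.mem_filter.1 h).2
  · exact (Finset.mem_filter.1 h).2.2

theorem bdualSet_antitone : Antitone K.bdualSet := by
  intro x y hxy z hz
  rcases Finset.mem_union.1 hz with hz | hz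
  · obtain ⟨hz, hyz⟩ := Finset.mem_filter.1 hz
    exact Finset.mem_union_left _ (Finset.mem_filter.2 ⟨hz, hxy.trans hyz⟩)
  · obtain ⟨hz, hrz, hyz⟩ := Finset.mem_filter.1 hz
    exact Finset.mem_union_right _ (Finset.mem_filter.2 ⟨hz, hrz, hxy.trans hyz⟩)

theorem mem_bdualSet_self_of_rk_eq_Rk {x : Finset V} (hx : x ∈ K.cells) (hr : K.rk x = K.Rk) :
    x ∈ K.bdualSet x :=
  Finset.mem_union_left _ (Finset.mem_filter.2 ⟨Finset.mem_filter.2 ⟨hx, hr⟩, subset_rfl⟩)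

theorem mem_bdualSet_self_of_card_dualSet_eq_one {x : Finset V} (hx : x ∈ K.cells)
    (hr : K.rk x + 1 = K.Rk) (hc : (K.dualSet x).card = 1) : x ∈ K.bdualSet x :=
  Finset.mem_union_right _ (Finset.mem_filter.2
    ⟨Finset.mem_filter.2 ⟨hx, x, hx, subset_rfl, hr, hc⟩, hr, subset_rfl⟩)

theorem dualSet_subset_cface {x : Finset V} (hr : K.rk x + 1 = K.Rk) :
    K.dualSet x ⊆ K.cface x := by
  intro z hz
  obtain ⟨hz, hxz⟩ := Finset.mem_filter.1 hz
  obtain ⟨hzK, hrz⟩ := Finset.mem_filter.1 hz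
  exact mem_cface.2 ⟨hzK, hxz, hrz.trans hr.symm⟩

theorem IsCC.subset_of_forall_mem_bdualSet (hK : K.IsCC) (hp : K.Pure) {b x : Finset V}
    (hx : x ∈ K.cells) (h : ∀ z ∈ K.bdualSet x, b ⊆ z) : b ⊆ x := by
  induction hn : K.Rk - K.rk x using Nat.strong_induction_on generalizing x with
  | _ n ih =>
  obtain ⟨w, hw, hxw, hwR⟩ := hp.exists_superset_rk_eq_Rk hx
  have hcodim : K.rk x = K.Rk ∨ K.rk x + 1 = K.Rk ∨ K.rk x + 2 ≤ K.Rk := by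
    have : K.rk x ≤ K.Rk := Finset.le_sup hx
    omega
  rcases hcodim with htop | hsub | hlow
  · exact h x (mem_bdualSet_self_of_rk_eq_Rk hx htop)
  · by_cases hc : (K.dualSet x).card = 1
    · exact h x (mem_bdualSet_self_of_card_dualSet_eq_one hx hsub hc)
    have hw_dual : w ∈ K.dualSet x :=
      Finset.mem_filter.2 ⟨Finset.mem_filter.2 ⟨hw, hwR⟩, hxw⟩
    have hcard : 1 < (K.dualSet x).card := by
      have := Finset.card_pos.2 ⟨w, hw_dual⟩
      omega
    obtain ⟨z₁, h₁, z₂, h₂, hne⟩ := Finset.one_lt_card.1 hcard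
    rw [← hK.inter_eq_of_mem_cface hx (dualSet_subset_cface hsub h₁)
      (dualSet_subset_cface hsub h₂) hne]
    exact Finset.subset_inter (h z₁ (Finset.mem_union_left _ h₁))
      (h z₂ (Finset.mem_union_left _ h₂))
  · obtain ⟨z₁, h₁, z₂, h₂, hne⟩ :=
      Finset.one_lt_card.1 (hK.one_lt_card_cface hx hw hxw (hwR ▸ hlow))
    have hb : ∀ z ∈ K.cface x, b ⊆ z := fun z hz => by
      obtain ⟨hzK, hxz, hrz⟩ := mem_cface.1 hz
      exact ih _ (by omega) hzK (fun u hu => h u (bdualSet_antitone hxz hu)) rfl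
    rw [← hK.inter_eq_of_mem_cface hx h₁ h₂ hne]
    exact Finset.subset_inter (hb z₁ h₁) (hb z₂ h₂)

theorem IsCC.bdualSet_subset_bdualSet_iff (hK : K.IsCC) (hp : K.Pure) {x y : Finset V}
    (hx : x ∈ K.cells) : K.bdualSet x ⊆ K.bdualSet y ↔ y ⊆ x :=
  ⟨fun h => hK.subset_of_forall_mem_bdualSet hp hx fun _ hz => subset_of_mem_bdualSet (h hz),
    fun h => bdualSet_antitone h⟩

end Precc

namespace Precc

variable {V : Type u} [DecidableEq V] [Fintype V]

/-- In a non-singular cc, the `∼`-dual (the disjoint union of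
the dual in `K` and the dual in `∂K`) reverses strict inclusions:
`x̃ ⊊ ỹ` iff `y ⊊ x`. -/
theorem statement_18 (K : Precc V) (hK : K.IsCC) (hns : K.NonSingular)
    (x : Finset V) (hx : x ∈ K.cells) (y : Finset V) (hy : y ∈ K.cells) :
    (K.bdualSet x ⊂ K.bdualSet y ↔ y ⊂ x) := by
  rw [ssubset_iff_subset_not_subset, ssubset_iff_subset_not_subset,
    hK.bdualSet_subset_bdualSet_iff hns.2.1 hx, hK.bdualSet_subset_bdualSet_iff hns.2.1 hy]

end Precc
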